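/- arXiv:2211.10838 — 3 statements merged into one kernel-verified Lean document; each statement's English description precedes it below -/
import Mathlib

section
/- For every natural number m, every sign ε ∈ {1,−1}, all real angles θ₁, θ₂, and every 2×2 real matrix X with first row (x, y) and second row (z, w), one has φ^ε_m(k_{θ₁} · X · k_{θ₂}) = e^{−i m θ₁} · e^{i ε m θ₂} · φ^ε_m(X), where k_θ is the rotation matrix with rows (cos θ, sin θ) and (−sin θ, cos θ). (This is the SO(2)×SO(2)-covariance of the distinguished Schwartz vector in the Weil representation, Proposition 'S0₂ covariance'.) -/
open Complex Real Matrix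

/-- The Schwartz function `φ^ε_m(x,y,z,w) = (x + εiy + iz − εw)^m · exp(−π(x²+y²+z²+w²))`,
viewed as a function of a 2×2 real matrix with rows `(x, y)` and `(z, w)`. -/
noncomputable def phiEps (m : ℕ) (ε : ℝ) (X : Matrix (Fin 2) (Fin 2) ℝ) : ℂ :=
  ((X 0 0 : ℂ) + (ε : ℂ) * Complex.I * (X 0 1 : ℂ) + Complex.I * (X 1 0 : ℂ)
      - (ε : ℂ) * (X 1 1 : ℂ)) ^ m *
    Complex.exp (-(π : ℂ) * (((X 0 0) ^ 2 + (X 0 1) ^ 2 + (X 1 0) ^ 2 + (X 1 1) ^ 2 : ℝ) : ℂ))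

/-- The rotation matrix `k_θ` with rows `(cos θ, sin θ)` and `(−sin θ, cos θ)`. -/
noncomputable def rotMat (θ : ℝ) : Matrix (Fin 2) (Fin 2) ℝ :=
  !![Real.cos θ, Real.sin θ; -Real.sin θ, Real.cos θ]

/-- SO(2) × SO(2)-covariance of the distinguished Schwartz vector:
`φ^ε_m(k_{θ₁} · X · k_{θ₂}) = e^{−imθ₁} · e^{iεmθ₂} · φ^ε_m(X)`. -/
theorem phiEps_rotation_covariance (m : ℕ) (ε : ℝ) (hε : ε = 1 ∨ ε = -1)
    (θ₁ θ₂ : ℝ) (X : Matrix (Fin 2) (Fin 2) ℝ) :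
    phiEps m ε (rotMat θ₁ * X * rotMat θ₂) =
      Complex.exp (-Complex.I * (m : ℂ) * (θ₁ : ℂ)) *
        Complex.exp (Complex.I * (ε : ℂ) * (m : ℂ) * (θ₂ : ℂ)) * phiEps m ε X := by
  set A := rotMat θ₁ * X * rotMat θ₂ with hA
  have e00 : A 0 0 = Real.cos θ₁ * X 0 0 * Real.cos θ₂ + Real.sin θ₁ * X 1 0 * Real.cos θ₂
      - Real.cos θ₁ * X 0 1 * Real.sin θ₂ - Real.sin θ₁ * X 1 1 * Real.sin θ₂ := by
    simp [hA, rotMat, Matrix.mul_apply, Matrix.vecMul, dotProduct, Fin.sum_univ_two]; ring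
  have e01 : A 0 1 = Real.cos θ₁ * X 0 0 * Real.sin θ₂ + Real.sin θ₁ * X 1 0 * Real.sin θ₂
      + Real.cos θ₁ * X 0 1 * Real.cos θ₂ + Real.sin θ₁ * X 1 1 * Real.cos θ₂ := by
    simp [hA, rotMat, Matrix.mul_apply, Matrix.vecMul, dotProduct, Fin.sum_univ_two]; ring
  have e10 : A 1 0 = -Real.sin θ₁ * X 0 0 * Real.cos θ₂ + Real.cos θ₁ * X 1 0 * Real.cos θ₂
      + Real.sin θ₁ * X 0 1 * Real.sin θ₂ - Real.cos θ₁ * X 1 1 * Real.sin θ₂ := by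
    simp [hA, rotMat, Matrix.mul_apply, Matrix.vecMul, dotProduct, Fin.sum_univ_two]; ring
  have e11 : A 1 1 = -Real.sin θ₁ * X 0 0 * Real.sin θ₂ + Real.cos θ₁ * X 1 0 * Real.sin θ₂
      - Real.sin θ₁ * X 0 1 * Real.cos θ₂ + Real.cos θ₁ * X 1 1 * Real.cos θ₂ := by
    simp [hA, rotMat, Matrix.mul_apply, Matrix.vecMul, dotProduct, Fin.sum_univ_two]; ring
  have hquad : (A 0 0) ^ 2 + (A 0 1) ^ 2 + (A 1 0) ^ 2 + (A 1 1) ^ 2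
      = (X 0 0) ^ 2 + (X 0 1) ^ 2 + (X 1 0) ^ 2 + (X 1 1) ^ 2 := by
    have h1 := Real.sin_sq_add_cos_sq θ₁
    have h2 := Real.sin_sq_add_cos_sq θ₂
    rw [e00, e01, e10, e11]
    linear_combination ((Real.sin θ₂ ^ 2 + Real.cos θ₂ ^ 2) *
        ((X 0 0) ^ 2 + (X 0 1) ^ 2 + (X 1 0) ^ 2 + (X 1 1) ^ 2)) * h1 +
      ((X 0 0) ^ 2 + (X 0 1) ^ 2 + (X 1 0) ^ 2 + (X 1 1) ^ 2) * h2
  have c1 : Complex.exp (-Complex.I * (θ₁ : ℂ)) = (Real.cos θ₁ : ℂ) - (Real.sin θ₁ : ℂ) * Complex.I := by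
    rw [show (-Complex.I * (θ₁ : ℂ)) = (-(θ₁:ℂ)) * Complex.I by ring, Complex.exp_mul_I]
    simp [Complex.cos_neg, Complex.sin_neg, ← Complex.ofReal_cos, ← Complex.ofReal_sin]
    ring
  have c2 : Complex.exp (Complex.I * (ε : ℂ) * (θ₂ : ℂ)) = (Real.cos θ₂ : ℂ) + (ε:ℂ) * (Real.sin θ₂ : ℂ) * Complex.I := by
    rw [show (Complex.I * (ε : ℂ) * (θ₂ : ℂ)) = ((ε:ℂ)*(θ₂:ℂ)) * Complex.I by ring, Complex.exp_mul_I]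
    rcases hε with h | h <;> subst h <;>
      simp [Complex.cos_neg, Complex.sin_neg, ← Complex.ofReal_cos, ← Complex.ofReal_sin] <;> ring
  have hlin : ((A 0 0 : ℂ) + (ε : ℂ) * Complex.I * (A 0 1 : ℂ) + Complex.I * (A 1 0 : ℂ)
      - (ε : ℂ) * (A 1 1 : ℂ))
      = Complex.exp (-Complex.I * (θ₁ : ℂ)) * Complex.exp (Complex.I * (ε : ℂ) * (θ₂ : ℂ)) *
        ((X 0 0 : ℂ) + (ε : ℂ) * Complex.I * (X 0 1 : ℂ) + Complex.I * (X 1 0 : ℂ)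
          - (ε : ℂ) * (X 1 1 : ℂ)) := by
    rw [c1, c2, e00, e01, e10, e11]
    push_cast
    have hI3 : Complex.I ^ 3 = -Complex.I := by
      simp [pow_succ, Complex.I_sq]
    rcases hε with h | h <;> subst h <;> push_cast <;> ring_nf <;>
      simp only [hI3, Complex.I_sq] <;> ring
  have hexp1 : Complex.exp (-Complex.I * (m : ℂ) * (θ₁ : ℂ)) = Complex.exp (-Complex.I * (θ₁ : ℂ)) ^ m := by
    rw [← Complex.exp_nat_mul]; ring_nf
  have hexp2 : Complex.exp (Complex.I * (ε : ℂ) * (m : ℂ) * (θ₂ : ℂ))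
      = Complex.exp (Complex.I * (ε : ℂ) * (θ₂ : ℂ)) ^ m := by
    rw [← Complex.exp_nat_mul]; ring_nf
  simp only [phiEps, hquad, hlin, hexp1, hexp2]
  rw [mul_pow, mul_pow]
  ring
end

section
/- Let m ≥ 0 be an integer and ε ∈ {1,−1}. In the eight real variables (x₂,y₂,z₂,w₂,x₄,y₄,z₄,w₄), set A = x₂ − εi y₂ + i z₂ + ε w₂, B = x₄ + εi y₄ + i z₄ − ε w₄, and p = A^{m+1}·B (a complex-coefficient polynomial function on ℝ⁸). Then, identically on ℝ⁸: −(z₂+εy₂)(∂p/∂z₄ + ε ∂p/∂y₄) + (z₄−εy₄)(∂p/∂z₂ − ε ∂p/∂y₂) − (w₂−εx₂)(∂p/∂w₄ − ε ∂p/∂x₄) + (w₄+εx₄)(∂p/∂w₂ + ε ∂p/∂x₂) + (ε/(2π))(∂²p/∂y₂∂z₄ + ∂²p/∂z₂∂y₄ − ∂²p/∂x₂∂w₄ − ∂²p/∂w₂∂x₄) = 2·[ (m+1)·((x₄+iz₄)² + (y₄+iw₄)²) − (x₂+iz₂)² − (y₂+iw₂)² ]·A^m. -/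
open Complex Real

/-- `A = x₂ − εi y₂ + i z₂ + ε w₂`. -/
noncomputable def Apoly (ε : ℝ) (x₂ y₂ z₂ w₂ : ℝ) : ℂ :=
  (x₂ : ℂ) - (ε : ℂ) * Complex.I * (y₂ : ℂ) + Complex.I * (z₂ : ℂ) + (ε : ℂ) * (w₂ : ℂ)

/-- `B = x₄ + εi y₄ + i z₄ − ε w₄`. -/
noncomputable def Bpoly (ε : ℝ) (x₄ y₄ z₄ w₄ : ℝ) : ℂ :=
  (x₄ : ℂ) + (ε : ℂ) * Complex.I * (y₄ : ℂ) + Complex.I * (z₄ : ℂ) - (ε : ℂ) * (w₄ : ℂ)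

/-- `p = A^{m+1} · B`, a complex-coefficient polynomial function on `ℝ⁸`. -/
noncomputable def pPoly (m : ℕ) (ε : ℝ) (x₂ y₂ z₂ w₂ x₄ y₄ z₄ w₄ : ℝ) : ℂ :=
  (Apoly ε x₂ y₂ z₂ w₂) ^ (m + 1) * Bpoly ε x₄ y₄ z₄ w₄

/-!
Every coordinate enters `p = A ^ (m + 1) * B` through a single affine factor, so each first
partial derivative is a constant multiple of `A ^ (m + 1)` or of `A ^ m * B`, and the four mixed
second derivatives cancel pairwise. Modulo `ε² = 1` the first-order part is
`-2 A ^ (m + 1) B(x₂, …) + 2 (m + 1) A ^ m A(x₄, …) B`, and both products are evaluated by the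
factorisation `A * B = (x + i z) ^ 2 + ε² (y + i w) ^ 2`, with `A` and `B` taken at the same point.
-/

theorem hasDerivAt_of_forall_eq_add_smul {𝕜 E : Type*} [NontriviallyNormedField 𝕜]
    [NormedAddCommGroup E] [NormedSpace 𝕜 E] {f : 𝕜 → E} {k : E} (hf : ∀ s, f s = f 0 + s • k)
    (t : 𝕜) : HasDerivAt f k t := by
  rw [funext hf]
  simpa using ((hasDerivAt_id t).smul_const k).const_add (f 0)

theorem deriv_pow_succ_mul {𝕜 𝔸 : Type*} [NontriviallyNormedField 𝕜] [NormedCommRing 𝔸]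
    [NormedAlgebra 𝕜 𝔸] {f : 𝕜 → 𝔸} {k : 𝔸} {t : 𝕜} (hf : HasDerivAt f k t) (n : ℕ) (b : 𝔸) :
    deriv (fun s => f s ^ (n + 1) * b) t = (n + 1) * f t ^ n * k * b := by
  simpa using ((hf.fun_pow (n + 1)).mul_const b).deriv

section Partials

variable (ε x y z w : ℝ)

theorem hasDerivAt_Apoly_x : HasDerivAt (fun s => Apoly ε s y z w) 1 x :=
  hasDerivAt_of_forall_eq_add_smul (fun s => by simp [Apoly]; ring) x

theorem hasDerivAt_Apoly_y : HasDerivAt (fun s => Apoly ε x s z w) (-(ε * I)) y :=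
  hasDerivAt_of_forall_eq_add_smul (fun s => by simp [Apoly]; ring) y

theorem hasDerivAt_Apoly_z : HasDerivAt (fun s => Apoly ε x y s w) I z :=
  hasDerivAt_of_forall_eq_add_smul (fun s => by simp [Apoly]; ring) z

theorem hasDerivAt_Apoly_w : HasDerivAt (fun s => Apoly ε x y z s) ε w :=
  hasDerivAt_of_forall_eq_add_smul (fun s => by simp [Apoly]; ring) w

theorem hasDerivAt_Bpoly_x : HasDerivAt (fun s => Bpoly ε s y z w) 1 x :=
  hasDerivAt_of_forall_eq_add_smul (fun s => by simp [Bpoly]; ring) x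

theorem hasDerivAt_Bpoly_y : HasDerivAt (fun s => Bpoly ε x s z w) (ε * I) y :=
  hasDerivAt_of_forall_eq_add_smul (fun s => by simp [Bpoly]; ring) y

theorem hasDerivAt_Bpoly_z : HasDerivAt (fun s => Bpoly ε x y s w) I z :=
  hasDerivAt_of_forall_eq_add_smul (fun s => by simp [Bpoly]; ring) z

theorem hasDerivAt_Bpoly_w : HasDerivAt (fun s => Bpoly ε x y z s) (-ε) w :=
  hasDerivAt_of_forall_eq_add_smul (fun s => by simp [Bpoly]; ring) w

end Partials

section PartialsOfP

variable (m : ℕ) (ε x₂ y₂ z₂ w₂ x₄ y₄ z₄ w₄ : ℝ)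

theorem deriv_pPoly_x₂ : deriv (fun s => pPoly m ε s y₂ z₂ w₂ x₄ y₄ z₄ w₄) x₂ =
    (m + 1) * Apoly ε x₂ y₂ z₂ w₂ ^ m * 1 * Bpoly ε x₄ y₄ z₄ w₄ :=
  deriv_pow_succ_mul (hasDerivAt_Apoly_x ε x₂ y₂ z₂ w₂) m _

theorem deriv_pPoly_y₂ : deriv (fun s => pPoly m ε x₂ s z₂ w₂ x₄ y₄ z₄ w₄) y₂ =
    (m + 1) * Apoly ε x₂ y₂ z₂ w₂ ^ m * -(ε * I) * Bpoly ε x₄ y₄ z₄ w₄ :=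
  deriv_pow_succ_mul (hasDerivAt_Apoly_y ε x₂ y₂ z₂ w₂) m _

theorem deriv_pPoly_z₂ : deriv (fun s => pPoly m ε x₂ y₂ s w₂ x₄ y₄ z₄ w₄) z₂ =
    (m + 1) * Apoly ε x₂ y₂ z₂ w₂ ^ m * I * Bpoly ε x₄ y₄ z₄ w₄ :=
  deriv_pow_succ_mul (hasDerivAt_Apoly_z ε x₂ y₂ z₂ w₂) m _

theorem deriv_pPoly_w₂ : deriv (fun s => pPoly m ε x₂ y₂ z₂ s x₄ y₄ z₄ w₄) w₂ =
    (m + 1) * Apoly ε x₂ y₂ z₂ w₂ ^ m * ε * Bpoly ε x₄ y₄ z₄ w₄ :=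
  deriv_pow_succ_mul (hasDerivAt_Apoly_w ε x₂ y₂ z₂ w₂) m _

theorem deriv_pPoly_x₄ : deriv (fun s => pPoly m ε x₂ y₂ z₂ w₂ s y₄ z₄ w₄) x₄ =
    Apoly ε x₂ y₂ z₂ w₂ ^ (m + 1) * 1 :=
  ((hasDerivAt_Bpoly_x ε x₄ y₄ z₄ w₄).const_mul _).deriv

theorem deriv_pPoly_y₄ : deriv (fun s => pPoly m ε x₂ y₂ z₂ w₂ x₄ s z₄ w₄) y₄ =
    Apoly ε x₂ y₂ z₂ w₂ ^ (m + 1) * (ε * I) :=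
  ((hasDerivAt_Bpoly_y ε x₄ y₄ z₄ w₄).const_mul _).deriv

theorem deriv_pPoly_z₄ : deriv (fun s => pPoly m ε x₂ y₂ z₂ w₂ x₄ y₄ s w₄) z₄ =
    Apoly ε x₂ y₂ z₂ w₂ ^ (m + 1) * I :=
  ((hasDerivAt_Bpoly_z ε x₄ y₄ z₄ w₄).const_mul _).deriv

theorem deriv_pPoly_w₄ : deriv (fun s => pPoly m ε x₂ y₂ z₂ w₂ x₄ y₄ z₄ s) w₄ =
    Apoly ε x₂ y₂ z₂ w₂ ^ (m + 1) * -ε :=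
  ((hasDerivAt_Bpoly_w ε x₄ y₄ z₄ w₄).const_mul _).deriv

end PartialsOfP

theorem Apoly_mul_Bpoly (ε x y z w : ℝ) :
    Apoly ε x y z w * Bpoly ε x y z w = (x + I * z) ^ 2 + ε ^ 2 * (y + I * w) ^ 2 := by
  simp only [Apoly, Bpoly]
  linear_combination (-(ε : ℂ) ^ 2 * ((y : ℂ) ^ 2 + (w : ℂ) ^ 2)) * I_sq

/-- The action of the lowering/raising operator `L^ε` of `U(2)` in the Fock model of the Weil
representation on `φ^{−ε}_{m+1} ⊗ φ^{ε}_1`, at the level of the polynomial `p = A^{m+1}B`. -/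
theorem lowering_operator_identity (m : ℕ) (ε : ℝ) (hε : ε = 1 ∨ ε = -1)
    (x₂ y₂ z₂ w₂ x₄ y₄ z₄ w₄ : ℝ) :
    -(((z₂ + ε * y₂ : ℝ) : ℂ)) *
        (deriv (fun z₄' : ℝ => pPoly m ε x₂ y₂ z₂ w₂ x₄ y₄ z₄' w₄) z₄ +
          (ε : ℂ) * deriv (fun y₄' : ℝ => pPoly m ε x₂ y₂ z₂ w₂ x₄ y₄' z₄ w₄) y₄) +
      (((z₄ - ε * y₄ : ℝ) : ℂ)) *
        (deriv (fun z₂' : ℝ => pPoly m ε x₂ y₂ z₂' w₂ x₄ y₄ z₄ w₄) z₂ -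
          (ε : ℂ) * deriv (fun y₂' : ℝ => pPoly m ε x₂ y₂' z₂ w₂ x₄ y₄ z₄ w₄) y₂) -
      (((w₂ - ε * x₂ : ℝ) : ℂ)) *
        (deriv (fun w₄' : ℝ => pPoly m ε x₂ y₂ z₂ w₂ x₄ y₄ z₄ w₄') w₄ -
          (ε : ℂ) * deriv (fun x₄' : ℝ => pPoly m ε x₂ y₂ z₂ w₂ x₄' y₄ z₄ w₄) x₄) +
      (((w₄ + ε * x₄ : ℝ) : ℂ)) *
        (deriv (fun w₂' : ℝ => pPoly m ε x₂ y₂ z₂ w₂' x₄ y₄ z₄ w₄) w₂ +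
          (ε : ℂ) * deriv (fun x₂' : ℝ => pPoly m ε x₂' y₂ z₂ w₂ x₄ y₄ z₄ w₄) x₂) +
      ((ε : ℂ) / (2 * (π : ℂ))) *
        (deriv (fun y₂' : ℝ =>
            deriv (fun z₄' : ℝ => pPoly m ε x₂ y₂' z₂ w₂ x₄ y₄ z₄' w₄) z₄) y₂ +
          deriv (fun z₂' : ℝ =>
            deriv (fun y₄' : ℝ => pPoly m ε x₂ y₂ z₂' w₂ x₄ y₄' z₄ w₄) y₄) z₂ -
          deriv (fun x₂' : ℝ =>
            deriv (fun w₄' : ℝ => pPoly m ε x₂' y₂ z₂ w₂ x₄ y₄ z₄ w₄') w₄) x₂ -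
          deriv (fun w₂' : ℝ =>
            deriv (fun x₄' : ℝ => pPoly m ε x₂ y₂ z₂ w₂' x₄' y₄ z₄ w₄) x₄) w₂) =
      2 * (((m : ℂ) + 1) * (((x₄ : ℂ) + Complex.I * (z₄ : ℂ)) ^ 2 +
              ((y₄ : ℂ) + Complex.I * (w₄ : ℂ)) ^ 2) -
            ((x₂ : ℂ) + Complex.I * (z₂ : ℂ)) ^ 2 -
            ((y₂ : ℂ) + Complex.I * (w₂ : ℂ)) ^ 2) *
        (Apoly ε x₂ y₂ z₂ w₂) ^ m := by
  simp only [deriv_pPoly_x₂, deriv_pPoly_y₂, deriv_pPoly_z₂, deriv_pPoly_w₂, deriv_pPoly_x₄,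
    deriv_pPoly_y₄, deriv_pPoly_z₄, deriv_pPoly_w₄,
    deriv_pow_succ_mul (hasDerivAt_Apoly_x ε x₂ y₂ z₂ w₂),
    deriv_pow_succ_mul (hasDerivAt_Apoly_y ε x₂ y₂ z₂ w₂),
    deriv_pow_succ_mul (hasDerivAt_Apoly_z ε x₂ y₂ z₂ w₂),
    deriv_pow_succ_mul (hasDerivAt_Apoly_w ε x₂ y₂ z₂ w₂)]
  have hε2 : (ε : ℂ) ^ 2 = 1 := by rcases hε with rfl | rfl <;> norm_num
  have hAB₂ := Apoly_mul_Bpoly ε x₂ y₂ z₂ w₂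
  have hAB₄ := Apoly_mul_Bpoly ε x₄ y₄ z₄ w₄
  rw [Bpoly] at hAB₂
  rw [Apoly] at hAB₄
  push_cast
  linear_combination (-2 * Apoly ε x₂ y₂ z₂ w₂ ^ m) * hAB₂ +
    (2 * (m + 1) * Apoly ε x₂ y₂ z₂ w₂ ^ m) * hAB₄ +
    (-Apoly ε x₂ y₂ z₂ w₂ ^ (m + 1) * (I * z₂ + ε * I * y₂ + 2 * x₂) +
      (m + 1) * Apoly ε x₂ y₂ z₂ w₂ ^ m * Bpoly ε x₄ y₄ z₄ w₄ * (I * z₄ - ε * I * y₄ + 2 * x₄) -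
      2 * Apoly ε x₂ y₂ z₂ w₂ ^ m * ((y₂ + I * w₂) ^ 2 - (m + 1) * (y₄ + I * w₄) ^ 2)) * hε2
end

section
/- For every integer m ≥ 2, the function y ↦ e^{2πiy}/(y − 2i)^m is (Bochner) integrable on ℝ and ∫_ℝ e^{2πiy}/(y − 2i)^m dy = (2πi)^m · e^{−4π} / (m−1)!. -/
/-!
For `Im a > 0` the function `f(t) = tⁿ e^{2πiat}` on `t > 0`, extended by zero, is integrable,
and its Fourier transform is a Laplace integral of a monomial:
`𝓕 f (y) = ∫₀^∞ tⁿ e^{-2πi(y-a)t} dt = n! / (2πi(y - a))^{n+1}`.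
For `n ≥ 1` this decays like `y⁻²`, so Fourier inversion at a point `x > 0`, where `f` is
continuous, gives `∫ e^{2πixy} / (y - a)^{n+1} dy = (2πi)^{n+1} xⁿ e^{2πiax} / n!`.
This replaces the residue computation; the theorem is the case `a = 2i`, `x = 1`.
-/

open Complex Real MeasureTheory Set Filter Topology
open scoped Nat FourierTransform

section LaplaceMonomial

variable {b : ℂ}

lemma norm_pow_mul_cexp_mul {t : ℝ} (ht : 0 ≤ t) (n : ℕ) :
    ‖(t : ℂ) ^ n * cexp (b * t)‖ = t ^ n * Real.exp (b.re * t) := by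
  simp [Complex.norm_exp, abs_of_nonneg ht]

lemma integrableOn_pow_mul_cexp_mul_Ioi (hb : b.re < 0) (n : ℕ) :
    IntegrableOn (fun t : ℝ => (t : ℂ) ^ n * cexp (b * t)) (Ioi 0) := by
  have h := integrableOn_rpow_mul_exp_neg_mul_rpow (s := n) (p := 1)
    (by linarith [(Nat.cast_nonneg n : (0 : ℝ) ≤ n)]) one_pos (neg_pos.2 hb)
  refine h.mono' (by fun_prop) ((ae_restrict_iff' measurableSet_Ioi).2 (ae_of_all _ ?_))
  intro t ht
  rw [norm_pow_mul_cexp_mul (le_of_lt ht), Real.rpow_one, Real.rpow_natCast, neg_neg]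

lemma tendsto_pow_mul_cexp_mul_atTop (hb : b.re < 0) (n : ℕ) :
    Tendsto (fun t : ℝ => (t : ℂ) ^ n * cexp (b * t)) atTop (𝓝 0) := by
  rw [tendsto_zero_iff_norm_tendsto_zero]
  refine (tendsto_rpow_mul_exp_neg_mul_atTop_nhds_zero n (-b.re) (neg_pos.2 hb)).congr' ?_
  filter_upwards [eventually_ge_atTop 0] with t ht
  rw [norm_pow_mul_cexp_mul ht, Real.rpow_natCast, neg_neg]

lemma integral_pow_succ_mul_cexp_mul_Ioi (hb : b.re < 0) (n : ℕ) :
    ∫ t in Ioi (0 : ℝ), (t : ℂ) ^ (n + 1) * cexp (b * t) =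
      (n + 1) / -b * ∫ t in Ioi (0 : ℝ), (t : ℂ) ^ n * cexp (b * t) := by
  have hb0 : b ≠ 0 := by rintro rfl; simp at hb
  have hderiv : ∀ t ∈ Ici (0 : ℝ), HasDerivAt (fun t : ℝ => (t : ℂ) ^ (n + 1) * cexp (b * t) / b)
      ((t : ℂ) ^ (n + 1) * cexp (b * t) + (n + 1) / b * ((t : ℂ) ^ n * cexp (b * t))) t := by
    intro t _
    have := (((hasDerivAt_pow (n + 1) (t : ℂ)).fun_mul
      ((hasDerivAt_const_mul b).cexp)).div_const b).comp_ofReal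
    convert this using 1
    field_simp
    push_cast
    ring
  have hint := integrableOn_pow_mul_cexp_mul_Ioi hb
  have := integral_Ioi_of_hasDerivAt_of_tendsto' hderiv
    ((hint (n + 1)).add ((hint n).const_mul _)) ((tendsto_pow_mul_cexp_mul_atTop hb _).div_const b)
  rw [integral_add (hint (n + 1)) ((hint n).const_mul _), integral_const_mul] at this
  simp only [ofReal_zero, zero_pow n.succ_ne_zero, zero_mul, zero_div, sub_zero] at this
  linear_combination this

lemma integral_pow_mul_cexp_mul_Ioi (hb : b.re < 0) (n : ℕ) :
    ∫ t in Ioi (0 : ℝ), (t : ℂ) ^ n * cexp (b * t) = n ! / (-b) ^ (n + 1) := by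
  induction n with
  | zero => simp [integral_exp_mul_complex_Ioi hb, neg_div, div_neg]
  | succ n ih =>
    rw [integral_pow_succ_mul_cexp_mul_Ioi hb, ih, Nat.factorial_succ]
    push_cast
    field_simp
    ring

end LaplaceMonomial

lemma one_add_sq_le_norm_ofReal_sub_I_pow (y : ℝ) {m : ℕ} (hm : 2 ≤ m) :
    1 + y ^ 2 ≤ ‖(y : ℂ) - I‖ ^ m := by
  have hsq : ‖(y : ℂ) - I‖ ^ 2 = 1 + y ^ 2 := by
    rw [Complex.sq_norm, Complex.normSq_apply]
    simp only [sub_re, ofReal_re, I_re, sub_im, ofReal_im, I_im]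
    ring
  have hone : 1 ≤ ‖(y : ℂ) - I‖ := by
    by_contra! h
    nlinarith [norm_nonneg ((y : ℂ) - I), sq_nonneg y]
  exact hsq ▸ pow_le_pow_right₀ hone hm

lemma integrable_inv_ofReal_sub_I_pow {m : ℕ} (hm : 2 ≤ m) :
    Integrable fun y : ℝ => (((y : ℂ) - I) ^ m)⁻¹ := by
  refine integrable_inv_one_add_sq.mono' (by fun_prop) (ae_of_all _ fun y => ?_)
  rw [norm_inv, norm_pow]
  exact inv_anti₀ (by positivity) (one_add_sq_le_norm_ofReal_sub_I_pow y hm)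

lemma integrable_inv_ofReal_sub_pow {a : ℂ} (ha : a.im ≠ 0) {m : ℕ} (hm : 2 ≤ m) :
    Integrable fun y : ℝ => (((y : ℂ) - a) ^ m)⁻¹ := by
  have hscale : ∀ y : ℝ, (y : ℂ) - a = a.im * (((y - a.re) / a.im : ℝ) - I) := by
    intro y
    apply Complex.ext <;> simp; field_simp
  have := (((integrable_inv_ofReal_sub_I_pow hm).comp_div ha).comp_sub_right a.re).const_mul
    ((a.im : ℂ) ^ m)⁻¹
  simpa only [hscale, mul_pow, mul_inv] using this

noncomputable def powExpIoi (n : ℕ) (a : ℂ) : ℝ → ℂ :=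
  (Ioi 0).indicator fun t => (t : ℂ) ^ n * cexp (2 * π * I * a * t)

section powExpIoi

variable {a : ℂ} (n : ℕ)

lemma integrable_powExpIoi (ha : 0 < a.im) : Integrable (powExpIoi n a) := by
  rw [powExpIoi, integrable_indicator_iff measurableSet_Ioi]
  exact integrableOn_pow_mul_cexp_mul_Ioi (by simp; positivity) n

lemma continuousAt_powExpIoi {x : ℝ} (hx : 0 < x) : ContinuousAt (powExpIoi n a) x := by
  have : (fun t : ℝ => (t : ℂ) ^ n * cexp (2 * π * I * a * t)) =ᶠ[𝓝 x] powExpIoi n a := by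
    filter_upwards [Ioi_mem_nhds hx] with t ht
    exact (indicator_of_mem ht (fun t : ℝ => (t : ℂ) ^ n * cexp (2 * π * I * a * t))).symm
  exact (by fun_prop : Continuous _).continuousAt.congr this

lemma fourier_powExpIoi (ha : 0 < a.im) (y : ℝ) :
    𝓕 (powExpIoi n a) y = n ! / (2 * π * I * (y - a)) ^ (n + 1) := by
  have hexp : ∀ t : ℝ, cexp (↑(-2 * π * t * y) * I) • powExpIoi n a t =
      (Ioi 0).indicator (fun t : ℝ => (t : ℂ) ^ n * cexp (2 * π * I * (a - y) * t)) t := by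
    intro t
    by_cases ht : t ∈ Ioi 0
    · simp only [powExpIoi, indicator_of_mem ht, smul_eq_mul]
      rw [mul_left_comm, ← Complex.exp_add]
      push_cast
      ring_nf
    · simp [powExpIoi, indicator_of_notMem ht]
  rw [Real.fourier_real_eq_integral_exp_smul, funext hexp, integral_indicator measurableSet_Ioi,
    integral_pow_mul_cexp_mul_Ioi (by simp; positivity)]
  ring_nf

end powExpIoi

lemma integrable_cexp_mul_div_sub_pow {a : ℂ} (ha : a.im ≠ 0) (x : ℝ) {m : ℕ} (hm : 2 ≤ m) :
    Integrable fun y : ℝ => cexp (2 * π * I * x * y) / ((y : ℂ) - a) ^ m := by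
  simp_rw [div_eq_mul_inv]
  refine (integrable_inv_ofReal_sub_pow ha hm).bdd_mul (c := 1) (by fun_prop) (ae_of_all _ ?_)
  intro y
  rw [Complex.norm_exp]
  simp

theorem integral_cexp_mul_div_sub_pow {a : ℂ} (ha : 0 < a.im) {x : ℝ} (hx : 0 < x) {m : ℕ}
    (hm : 2 ≤ m) :
    ∫ y : ℝ, cexp (2 * π * I * x * y) / ((y : ℂ) - a) ^ m =
      (2 * π * I) ^ m * x ^ (m - 1) * cexp (2 * π * I * a * x) / (m - 1)! := by
  obtain ⟨n, rfl⟩ : ∃ n, m = n + 1 := ⟨m - 1, by omega⟩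
  rw [Nat.add_sub_cancel]
  have hF : 𝓕 (powExpIoi n a) =
      fun y : ℝ => (n ! / (2 * π * I) ^ (n + 1)) * (((y : ℂ) - a) ^ (n + 1))⁻¹ := by
    ext y
    rw [fourier_powExpIoi n ha, mul_pow, div_mul_eq_div_div, div_eq_mul_inv]
  have hinv := (integrable_powExpIoi n ha).fourierInv_fourier_eq
    (hF ▸ (integrable_inv_ofReal_sub_pow ha.ne' hm).const_mul _) (continuousAt_powExpIoi n hx)
  have hintegrand : ∀ y : ℝ, cexp (↑(2 * π * inner ℝ y x) * I) •
      (n ! / (2 * π * I) ^ (n + 1) * (((y : ℂ) - a) ^ (n + 1))⁻¹) =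
      n ! / (2 * π * I) ^ (n + 1) * (cexp (2 * π * I * x * y) / ((y : ℂ) - a) ^ (n + 1)) := by
    intro y
    simp only [smul_eq_mul, RCLike.inner_apply, conj_trivial]
    push_cast
    ring_nf
  rw [hF, Real.fourierInv_eq', powExpIoi, indicator_of_mem (mem_Ioi.2 hx)] at hinv
  simp_rw [hintegrand, integral_const_mul] at hinv
  rw [mul_assoc ((2 * π * I : ℂ) ^ (n + 1)), ← hinv]
  field_simp [Nat.factorial_ne_zero]

/-- Contour-integral evaluation: for `m ≥ 2`, `y ↦ e^{2πiy}/(y − 2i)^m` is integrable on `ℝ`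
and `∫_ℝ e^{2πiy}/(y − 2i)^m dy = (2πi)^m · e^{−4π} / (m−1)!`. -/
theorem integral_exp_div_pow (m : ℕ) (hm : 2 ≤ m) :
    Integrable (fun y : ℝ => Complex.exp (2 * (π : ℂ) * Complex.I * (y : ℂ)) /
      ((y : ℂ) - 2 * Complex.I) ^ m) ∧
    ∫ y : ℝ, Complex.exp (2 * (π : ℂ) * Complex.I * (y : ℂ)) /
        ((y : ℂ) - 2 * Complex.I) ^ m =
      (2 * (π : ℂ) * Complex.I) ^ m * Complex.exp (-4 * (π : ℂ)) /
        ((Nat.factorial (m - 1) : ℂ)) := by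
  have hexp : 2 * π * I * (2 * I) = -4 * π := by linear_combination 4 * π * I_sq
  constructor
  · simpa using integrable_cexp_mul_div_sub_pow (a := 2 * I) (by simp) 1 hm
  · simpa [hexp] using integral_cexp_mul_div_sub_pow (a := 2 * I) (by simp) one_pos hm
end
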